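/- The parallel-universe tie-handling (PUT) version of Coombs violates positive involvement: there exists a profile P, a candidate x ∈ CoombsPUT(P), and a profile P' obtained from P by adding one new voter whose ballot ranks x in first place, such that x ∉ CoombsPUT(P'). (A witness: P is the 6-voter profile on candidates {a,b,c,d} with ballots abdc, cadb, cadb, adbc, bcda, cbad, in which CoombsPUT(P) = {a,c}; adding a voter with ballot adcb yields CoombsPUT(P') = {c}, so a loses.) -/
import Mathlib


open scoped Classical

/-- `r` is a strict linear order on the finite set `X`, relating only members of `X`. -/
def IsLinOn (X : Finset ℕ) (r : ℕ → ℕ → Prop) : Prop :=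
  (∀ a b, r a b → a ∈ X ∧ b ∈ X) ∧
  (∀ a, ¬ r a a) ∧
  (∀ a b c, r a b → r b c → r a c) ∧
  (∀ a ∈ X, ∀ b ∈ X, a ≠ b → r a b ∨ r b a)

/-- A profile assigns to each voter in a nonempty finite set of voters a strict linear
order (ballot) on a nonempty finite set of candidates.  Voters and candidates are both
drawn from the infinite set `ℕ`. -/
structure Profile where
  voters : Finset ℕ
  cands : Finset ℕ
  voters_nonempty : voters.Nonempty
  cands_nonempty : cands.Nonempty
  ballot : ℕ → ℕ → ℕ → Prop
  ballot_lin : ∀ i ∈ voters, IsLinOn cands (ballot i)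

/-- `F` is a voting method: it assigns to each profile a nonempty set of winners
among the candidates of the profile. -/
def VotingMethod (F : Profile → Finset ℕ) : Prop :=
  ∀ P : Profile, (F P).Nonempty ∧ F P ⊆ P.cands

/-- The ballot `r` ranks `x` in first place among the candidates in `X`. -/
def RanksFirst (X : Finset ℕ) (r : ℕ → ℕ → Prop) (x : ℕ) : Prop :=
  x ∈ X ∧ ∀ y ∈ X, y ≠ x → r x y

/-- `P'` is obtained from `P` by adding one new voter `j` whose ballot ranks `x` in
first place. -/
def AddVoter (P P' : Profile) (j x : ℕ) : Prop :=
  P'.cands = P.cands ∧ j ∉ P.voters ∧ P'.voters = insert j P.voters ∧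
  (∀ i ∈ P.voters, ∀ a b, (P'.ballot i a b ↔ P.ballot i a b)) ∧
  RanksFirst P.cands (P'.ballot j) x

/-- `F` satisfies positive involvement (PI). -/
def SatisfiesPI (F : Profile → Finset ℕ) : Prop :=
  ∀ (P P' : Profile) (j x : ℕ), x ∈ F P → AddVoter P P' j x → x ∈ F P'

/-- The number of voters of `P` who rank `x` first among the candidates in `Y`. -/
noncomputable def countFirst (P : Profile) (Y : Finset ℕ) (x : ℕ) : ℕ :=
  (P.voters.filter (fun i => ∀ y ∈ Y, y ≠ x → P.ballot i x y)).card

/-- `x` is a majority winner in the profile `P` restricted to the candidates in `Y`. -/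
noncomputable def majWinner (P : Profile) (Y : Finset ℕ) (x : ℕ) : Prop :=
  x ∈ Y ∧ 2 * countFirst P Y x > P.voters.card

/-- The number of voters of `P` who rank `x` last among the candidates in `Y`. -/
noncomputable def countLast (P : Profile) (Y : Finset ℕ) (x : ℕ) : ℕ :=
  (P.voters.filter (fun i => ∀ y ∈ Y, y ≠ x → P.ballot i y x)).card

/-- `x` has the most last-place votes among the candidates in `Y`. -/
noncomputable def maxLast (P : Profile) (Y : Finset ℕ) (x : ℕ) : Prop :=
  x ∈ Y ∧ ∀ y ∈ Y, countLast P Y y ≤ countLast P Y x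

/-- The `n`-th stage of the Coombs`_L` elimination process: if some remaining candidate
is a majority winner, stop; otherwise remove the `L`-minimal candidate among those with
the most last-place votes. -/
noncomputable def coombsLStage (P : Profile) (L : ℕ → ℕ → Prop) : ℕ → Finset ℕ
  | 0 => P.cands
  | n + 1 =>
    let Y := coombsLStage P L n
    if (∃ x, majWinner P Y x) then Y
    else Y \ (Y.filter (fun x => maxLast P Y x ∧
      ∀ y, maxLast P Y y → y ≠ x → L x y))

/-- The PUT (parallel-universe tie-handling) version of Coombs: `x` wins in `P` iff `x`
wins according to Coombs`_L` (i.e., `x` is the majority winner at which the `L`-guided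
elimination process stops) for some linear order `L` on the candidates. -/
noncomputable def CoombsPUT (P : Profile) : Finset ℕ :=
  P.cands.filter (fun x =>
    ∃ L : ℕ → ℕ → Prop, IsLinOn P.cands L ∧
      majWinner P (coombsLStage P L P.cands.card) x)

-- DEFS
def rk : ℕ → ℕ → ℕ
  | 0 => fun x => match x with | 0 => 0 | 1 => 1 | 3 => 2 | _ => 3   -- a b d c
  | 1 => fun x => match x with | 2 => 0 | 0 => 1 | 3 => 2 | _ => 3   -- c a d b
  | 2 => fun x => match x with | 2 => 0 | 0 => 1 | 3 => 2 | _ => 3   -- c a d b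
  | 3 => fun x => match x with | 0 => 0 | 3 => 1 | 1 => 2 | _ => 3   -- a d b c
  | 4 => fun x => match x with | 1 => 0 | 2 => 1 | 3 => 2 | _ => 3   -- b c d a
  | 5 => fun x => match x with | 2 => 0 | 1 => 1 | 0 => 2 | _ => 3   -- c b a d
  | 6 => fun x => match x with | 0 => 0 | 3 => 1 | 2 => 2 | _ => 3   -- a d c b
  | _ => fun x => x

def B (i a b : ℕ) : Prop := a < 4 ∧ b < 4 ∧ rk i a < rk i b

instance (i a b : ℕ) : Decidable (B i a b) := by unfold B; infer_instance

def g0 : ℕ → ℕ := fun x => match x with | 2 => 0 | 0 => 1 | 1 => 2 | _ => 3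

def L0 (a b : ℕ) : Prop := a < 4 ∧ b < 4 ∧ g0 a < g0 b

instance (a b : ℕ) : Decidable (L0 a b) := by unfold L0; infer_instance

lemma isLinOn_rank (g : ℕ → ℕ) (hg : ∀ a < 4, ∀ b < 4, a ≠ b → g a ≠ g b) :
    IsLinOn (Finset.range 4) (fun a b => a < 4 ∧ b < 4 ∧ g a < g b) := by
  refine ⟨?_, ?_, ?_, ?_⟩
  · rintro a b ⟨ha, hb, -⟩
    exact ⟨Finset.mem_range.2 ha, Finset.mem_range.2 hb⟩
  · rintro a ⟨-, -, h⟩; exact lt_irrefl _ h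
  · rintro a b c ⟨ha, hb, h1⟩ ⟨-, hc, h2⟩; exact ⟨ha, hc, h1.trans h2⟩
  · intro a ha b hb hne
    have ha' := Finset.mem_range.1 ha
    have hb' := Finset.mem_range.1 hb
    rcases lt_or_gt_of_ne (hg a ha' b hb' hne) with h | h
    · exact Or.inl ⟨ha', hb', h⟩
    · exact Or.inr ⟨hb', ha', h⟩

lemma B_lin (i : ℕ) (hi : i < 7) : IsLinOn (Finset.range 4) (B i) := by
  have : ∀ i < 7, ∀ a < 4, ∀ b < 4, a ≠ b → rk i a ≠ rk i b := by decide
  exact isLinOn_rank (rk i) (this i hi)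

lemma L0_lin : IsLinOn (Finset.range 4) L0 :=
  isLinOn_rank g0 (by decide)

def P0 : Profile :=
  ⟨Finset.range 6, Finset.range 4, ⟨0, by decide⟩, ⟨0, by decide⟩, B,
    fun i hi => B_lin i (by have := Finset.mem_range.1 hi; omega)⟩

def P1 : Profile :=
  ⟨Finset.range 7, Finset.range 4, ⟨0, by decide⟩, ⟨0, by decide⟩, B,
    fun i hi => B_lin i (Finset.mem_range.1 hi)⟩

lemma countFirst_B (P : Profile) (hb : P.ballot = B) (Y : Finset ℕ) (x : ℕ) :
    countFirst P Y x = (P.voters.filter fun i => ∀ y ∈ Y, y ≠ x → B i x y).card := by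
  simp only [countFirst, hb]

lemma countLast_B (P : Profile) (hb : P.ballot = B) (Y : Finset ℕ) (x : ℕ) :
    countLast P Y x = (P.voters.filter fun i => ∀ y ∈ Y, y ≠ x → B i y x).card := by
  simp only [countLast, hb]

example : countFirst P0 (Finset.range 4) 2 = 3 := by
  rw [countFirst_B P0 rfl]; decide

example : countLast P1 (Finset.range 4) 1 = 3 := by
  rw [countLast_B P1 rfl]; decide

lemma coombs_zero (P : Profile) (L : ℕ → ℕ → Prop) : coombsLStage P L 0 = P.cands := rfl

lemma coombs_succ (P : Profile) (L : ℕ → ℕ → Prop) (n : ℕ) :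
    coombsLStage P L (n+1) =
      if (∃ x, majWinner P (coombsLStage P L n) x) then coombsLStage P L n
      else coombsLStage P L n \ ((coombsLStage P L n).filter (fun x =>
        maxLast P (coombsLStage P L n) x ∧
        ∀ y, maxLast P (coombsLStage P L n) y → y ≠ x → L x y)) := rfl

-- counts for P0 on full candidate set
lemma cf0_full : ∀ x < 4, countFirst P0 (Finset.range 4) x = [2,1,3,0].getD x 0 := by
  intro x hx
  interval_cases x <;> (rw [countFirst_B P0 rfl]; decide)

lemma cl0_full : ∀ x < 4, countLast P0 (Finset.range 4) x = [1,2,2,1].getD x 0 := by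
  intro x hx
  interval_cases x <;> (rw [countLast_B P0 rfl]; decide)

lemma cf1_full : ∀ x < 4, countFirst P1 (Finset.range 4) x = [3,1,3,0].getD x 0 := by
  intro x hx
  interval_cases x <;> (rw [countFirst_B P1 rfl]; decide)

lemma cl1_full : ∀ x < 4, countLast P1 (Finset.range 4) x = [1,3,2,1].getD x 0 := by
  intro x hx
  interval_cases x <;> (rw [countLast_B P1 rfl]; decide)

lemma hnomaj0 : ¬ ∃ x, majWinner P0 (Finset.range 4) x := by
  rintro ⟨x, hx, hcnt⟩
  have hx4 := Finset.mem_range.1 hx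
  have hcard : P0.voters.card = 6 := rfl
  rw [hcard, cf0_full x hx4] at hcnt
  interval_cases x <;> simp_all

lemma hnomaj1 : ¬ ∃ x, majWinner P1 (Finset.range 4) x := by
  rintro ⟨x, hx, hcnt⟩
  have hx4 := Finset.mem_range.1 hx
  have hcard : P1.voters.card = 7 := rfl
  rw [hcard, cf1_full x hx4] at hcnt
  interval_cases x <;> simp_all

lemma hml0 : ∀ x, maxLast P0 (Finset.range 4) x ↔ (x = 1 ∨ x = 2) := by
  intro x
  constructor
  · rintro ⟨hx, hall⟩
    have hx4 := Finset.mem_range.1 hx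
    have h1 := hall 1 (by decide)
    rw [cl0_full 1 (by omega), cl0_full x hx4] at h1
    interval_cases x <;> simp_all
  · have key : ∀ y ∈ Finset.range 4, ∀ x < 4,
        countLast P0 (Finset.range 4) y ≤ countLast P0 (Finset.range 4) x ∨
          ¬ (x = 1 ∨ x = 2) := by
      intro y hy x hx4
      have hy4 := Finset.mem_range.1 hy
      rw [cl0_full y hy4, cl0_full x hx4]
      interval_cases x <;> interval_cases y <;> simp
    rintro (rfl | rfl)
    · exact ⟨by decide, fun y hy => (key y hy 1 (by omega)).resolve_right (by simp)⟩
    · exact ⟨by decide, fun y hy => (key y hy 2 (by omega)).resolve_right (by simp)⟩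

lemma hml1 : ∀ x, maxLast P1 (Finset.range 4) x ↔ x = 1 := by
  intro x
  constructor
  · rintro ⟨hx, hall⟩
    have hx4 := Finset.mem_range.1 hx
    have h1 := hall 1 (by decide)
    rw [cl1_full 1 (by omega), cl1_full x hx4] at h1
    interval_cases x <;> simp_all
  · rintro rfl
    refine ⟨by decide, fun y hy => ?_⟩
    have hy4 := Finset.mem_range.1 hy
    rw [cl1_full y hy4, cl1_full 1 (by omega)]
    interval_cases y <;> simp

lemma nL12 : ¬ L0 1 2 := by
  rintro ⟨-, -, h⟩; exact absurd h (by decide)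

lemma hf0 : (Finset.range 4).filter (fun x => maxLast P0 (Finset.range 4) x ∧
    ∀ y, maxLast P0 (Finset.range 4) y → y ≠ x → L0 x y) = {2} := by
  ext z
  simp only [Finset.mem_filter, Finset.mem_singleton]
  constructor
  · rintro ⟨hz, hm, hmin⟩
    rcases (hml0 z).1 hm with rfl | rfl
    · exact absurd (hmin 2 ((hml0 2).2 (Or.inr rfl)) (by decide)) nL12
    · rfl
  · rintro rfl
    refine ⟨by decide, (hml0 2).2 (Or.inr rfl), fun y hy hne => ?_⟩
    rcases (hml0 y).1 hy with rfl | rfl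
    · exact ⟨by decide, by decide, by decide⟩
    · exact absurd rfl hne

lemma hf1 (L : ℕ → ℕ → Prop) : (Finset.range 4).filter (fun x => maxLast P1 (Finset.range 4) x ∧
    ∀ y, maxLast P1 (Finset.range 4) y → y ≠ x → L x y) = {1} := by
  ext z
  simp only [Finset.mem_filter, Finset.mem_singleton]
  constructor
  · rintro ⟨hz, hm, -⟩
    exact (hml1 z).1 hm
  · rintro rfl
    exact ⟨by decide, (hml1 1).2 rfl, fun y hy hne => absurd ((hml1 y).1 hy) hne⟩

lemma hmaj013 : ∃ x, majWinner P0 ({0,1,3} : Finset ℕ) x := by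
  refine ⟨0, by decide, ?_⟩
  have : countFirst P0 ({0,1,3} : Finset ℕ) 0 = 4 := by
    rw [countFirst_B P0 rfl]; decide
  rw [this]
  decide

lemma hmaj023 : ∃ x, majWinner P1 ({0,2,3} : Finset ℕ) x := by
  refine ⟨2, by decide, ?_⟩
  have : countFirst P1 ({0,2,3} : Finset ℕ) 2 = 4 := by
    rw [countFirst_B P1 rfl]; decide
  rw [this]
  decide

lemma stage4_P0 : coombsLStage P0 L0 4 = ({0,1,3} : Finset ℕ) := by
  have h1 : coombsLStage P0 L0 1 = ({0,1,3} : Finset ℕ) := by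
    rw [coombs_succ, coombs_zero]
    rw [show P0.cands = Finset.range 4 from rfl]
    rw [if_neg hnomaj0, hf0]
    decide
  have h2 : coombsLStage P0 L0 2 = ({0,1,3} : Finset ℕ) := by
    rw [coombs_succ, h1, if_pos hmaj013]
  have h3 : coombsLStage P0 L0 3 = ({0,1,3} : Finset ℕ) := by
    rw [coombs_succ, h2, if_pos hmaj013]
  rw [coombs_succ, h3, if_pos hmaj013]

lemma stage4_P1 (L : ℕ → ℕ → Prop) : coombsLStage P1 L 4 = ({0,2,3} : Finset ℕ) := by
  have h1 : coombsLStage P1 L 1 = ({0,2,3} : Finset ℕ) := by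
    rw [coombs_succ, coombs_zero]
    rw [show P1.cands = Finset.range 4 from rfl]
    rw [if_neg hnomaj1, hf1]
    decide
  have h2 : coombsLStage P1 L 2 = ({0,2,3} : Finset ℕ) := by
    rw [coombs_succ, h1, if_pos hmaj023]
  have h3 : coombsLStage P1 L 3 = ({0,2,3} : Finset ℕ) := by
    rw [coombs_succ, h2, if_pos hmaj023]
  rw [coombs_succ, h3, if_pos hmaj023]

theorem coombsPUT_violates_PI :
    ∃ (P P' : Profile) (j x : ℕ),
      x ∈ CoombsPUT P ∧ AddVoter P P' j x ∧ x ∉ CoombsPUT P' := by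
  refine ⟨P0, P1, 6, 0, ?_, ?_, ?_⟩
  · unfold CoombsPUT
    rw [Finset.mem_filter]
    refine ⟨by decide, L0, L0_lin, ?_⟩
    rw [show P0.cands.card = 4 from rfl, stage4_P0]
    refine ⟨by decide, ?_⟩
    have : countFirst P0 ({0,1,3} : Finset ℕ) 0 = 4 := by
      rw [countFirst_B P0 rfl]; decide
    rw [this]; decide
  · refine ⟨rfl, by decide, Finset.range_add_one, fun i hi a b => Iff.rfl, ?_⟩
    show RanksFirst (Finset.range 4) (B 6) 0
    exact ⟨by decide, by decide⟩
  · intro hmem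
    unfold CoombsPUT at hmem
    rw [Finset.mem_filter] at hmem
    obtain ⟨-, L, hL, hmaj⟩ := hmem
    rw [show P1.cands.card = 4 from rfl, stage4_P1 L] at hmaj
    obtain ⟨-, hcnt⟩ := hmaj
    have : countFirst P1 ({0,2,3} : Finset ℕ) 0 = 3 := by
      rw [countFirst_B P1 rfl]; decide
    rw [this, show P1.voters.card = 7 from rfl] at hcnt
    omega
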